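/- Let f : ℝⁿ → ℝ be differentiable and L-smooth with L > 0, let g(x) = Σ_{i=1}^n g_i(x_i), set F := f + g, let x* be a global minimizer of F, ξ(x) := F(x) − F(x*), and define λ(x) := −L·inf_{y ∈ ℝⁿ} { ⟨∇f(x), y⟩ + (L/2)‖y‖² + g(x+y) − g(x) }. Let x⁰ ∈ ℝⁿ and assume F is weakly PL with constant ρ > 0 relative to x⁰, i.e. λ(x) ≥ ρ·ξ(x)² for every x ∈ ℝⁿ with ξ(x) ≤ ξ(x⁰). Let x^{k+1} := x^k + (u^k)_{[S_k]}, where S_k ⊆ {1,…,n} is nonempty and u^k ∈ ℝⁿ, and suppose there is c > 0 such that for every k < K one has −U_{S_k}(x^k, u^k) ≥ c·λ(x^k). Then ξ(x^K) ≤ ξ(x⁰) / (1 + ξ(x⁰)·ρ·c·K). -/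

import Mathlib

open scoped RealInnerProductSpace BigOperators

/-- The quantity `λ(x) = -L · inf_y { ⟨∇f(x),y⟩ + (L/2)‖y‖² + g(x+y) - g(x) }`. -/
noncomputable def lamFun {n : ℕ} (f g : EuclideanSpace ℝ (Fin n) → ℝ) (L : ℝ)
    (x : EuclideanSpace ℝ (Fin n)) : ℝ :=
  -L * sInf (Set.range fun y : EuclideanSpace ℝ (Fin n) =>
    ⟪gradient f x, y⟫ + L / 2 * ‖y‖ ^ 2 + g (x + y) - g x)

/-- The masked vector `u_{[S]}`. -/
noncomputable def maskVec {n : ℕ} (S : Finset (Fin n)) (u : EuclideanSpace ℝ (Fin n)) :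
    EuclideanSpace ℝ (Fin n) :=
  (EuclideanSpace.equiv (Fin n) ℝ).symm fun i => if i ∈ S then u i else 0

/-- The block upper bound `U_S(x, u)` with `M = L·I`. -/
noncomputable def USFun {n : ℕ} (f : EuclideanSpace ℝ (Fin n) → ℝ) (gi : Fin n → ℝ → ℝ)
    (L : ℝ) (S : Finset (Fin n)) (x u : EuclideanSpace ℝ (Fin n)) : ℝ :=
  (∑ i ∈ S, gradient f x i * u i) + L / 2 * (∑ i ∈ S, u i ^ 2) +
    ∑ i ∈ S, (gi i (x i + u i) - gi i (x i))

/-!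
Each block step decreases the optimality gap `ξ` by at least `-U_S ≥ c λ`, and along the
iterates `ξ` stays below `ξ(x⁰)`, so weak PL turns this into `ξₖ₊₁ ≤ ξₖ - ρ c ξₖ²`.
For such a recursion `1/ξₖ` grows by at least `ρ c` per step, which gives the `O(1/K)` rate.
-/

theorem inv_add_le_inv_of_le_sub_mul_sq {s t a : ℝ} (ha : 0 ≤ a) (ht : 0 < t)
    (h : t ≤ s - a * s ^ 2) : s⁻¹ + a ≤ t⁻¹ := by
  have hts : t ≤ s := by nlinarith [mul_nonneg ha (sq_nonneg s)]
  have hs : 0 < s := ht.trans_le hts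
  have key : a * (s * t) ≤ s - t := by
    nlinarith [mul_le_mul_of_nonneg_left hts (mul_nonneg ha hs.le)]
  have hgap : a ≤ t⁻¹ - s⁻¹ := by
    rw [inv_sub_inv ht.ne' hs.ne', le_div_iff₀ (by positivity)]
    linarith
  linarith

theorem le_div_one_add_mul_of_le_sub_mul_sq {ξ : ℕ → ℝ} {a : ℝ} (ha : 0 ≤ a)
    (hξ : ∀ k, 0 ≤ ξ k) {K : ℕ}
    (hstep : ∀ k < K, ξ k ≤ ξ 0 → ξ (k + 1) ≤ ξ k - a * ξ k ^ 2) :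
    ξ K ≤ ξ 0 / (1 + ξ 0 * a * K) := by
  have hle_init : ∀ k ≤ K, ξ k ≤ ξ 0 := by
    intro k
    induction k with
    | zero => intro _; rfl
    | succ k ih =>
      intro hk
      have hk0 := ih (Nat.le_of_succ_le hk)
      nlinarith [hstep k hk hk0, mul_nonneg ha (sq_nonneg (ξ k))]
  have hdesc : ∀ k < K, ξ (k + 1) ≤ ξ k - a * ξ k ^ 2 :=
    fun k hk => hstep k hk (hle_init k hk.le)
  have hinv : ∀ k ≤ K, 0 < ξ k → (ξ 0)⁻¹ + a * k ≤ (ξ k)⁻¹ := by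
    intro k
    induction k with
    | zero => intro _ _; simp
    | succ k ih =>
      intro hk hpos
      have hdk := hdesc k hk
      have hposk : 0 < ξ k := by nlinarith [mul_nonneg ha (sq_nonneg (ξ k))]
      have := inv_add_le_inv_of_le_sub_mul_sq ha hpos hdk
      push_cast
      linarith [ih (Nat.le_of_succ_le hk) hposk]
  rcases (hξ K).eq_or_lt with hzero | hpos
  · rw [← hzero]
    exact div_nonneg (hξ 0) (by have := hξ 0; positivity)
  have hpos0 : 0 < ξ 0 := hpos.trans_le (hle_init K le_rfl)
  calc ξ K = ((ξ K)⁻¹)⁻¹ := (inv_inv _).symm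
    _ ≤ ((ξ 0)⁻¹ + a * K)⁻¹ := inv_anti₀ (by positivity) (hinv K le_rfl hpos)
    _ = ξ 0 / (1 + ξ 0 * a * K) := by field_simp

section BlockStep

variable {n : ℕ}

lemma maskVec_apply (S : Finset (Fin n)) (u : EuclideanSpace ℝ (Fin n)) (i : Fin n) :
    maskVec S u i = if i ∈ S then u i else 0 := rfl

lemma inner_maskVec (v u : EuclideanSpace ℝ (Fin n)) (S : Finset (Fin n)) :
    ⟪v, maskVec S u⟫ = ∑ i ∈ S, v i * u i := by
  simp only [PiLp.inner_apply, RCLike.inner_apply, conj_trivial, maskVec_apply, ite_mul,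
    zero_mul, Finset.sum_ite_mem, Finset.univ_inter]
  exact Finset.sum_congr rfl fun i _ => mul_comm _ _

lemma norm_maskVec_sq (S : Finset (Fin n)) (u : EuclideanSpace ℝ (Fin n)) :
    ‖maskVec S u‖ ^ 2 = ∑ i ∈ S, u i ^ 2 := by
  rw [← real_inner_self_eq_norm_sq, inner_maskVec]
  exact Finset.sum_congr rfl fun i hi => by simp [maskVec_apply, hi, sq]

lemma sum_add_maskVec (gi : Fin n → ℝ → ℝ) (S : Finset (Fin n))
    (x u : EuclideanSpace ℝ (Fin n)) :
    ∑ i, gi i ((x + maskVec S u) i) =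
      ∑ i, gi i (x i) + ∑ i ∈ S, (gi i (x i + u i) - gi i (x i)) := by
  have hcoord : ∀ i, gi i ((x + maskVec S u) i) =
      gi i (x i) + if i ∈ S then gi i (x i + u i) - gi i (x i) else 0 := by
    intro i
    by_cases hi : i ∈ S <;> simp [maskVec_apply, hi]
  rw [Finset.sum_congr rfl fun i _ => hcoord i, Finset.sum_add_distrib, Finset.sum_ite_mem,
    Finset.univ_inter]

theorem add_maskVec_le_add_USFun {f g : EuclideanSpace ℝ (Fin n) → ℝ} {gi : Fin n → ℝ → ℝ}
    {L : ℝ} (hsmooth : ∀ x h : EuclideanSpace ℝ (Fin n),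
      f (x + h) ≤ f x + ⟪gradient f x, h⟫ + L / 2 * ‖h‖ ^ 2)
    (hg : ∀ x : EuclideanSpace ℝ (Fin n), g x = ∑ i, gi i (x i))
    (S : Finset (Fin n)) (x u : EuclideanSpace ℝ (Fin n)) :
    f (x + maskVec S u) + g (x + maskVec S u) ≤ f x + g x + USFun f gi L S x u := by
  have hf := hsmooth x (maskVec S u)
  rw [inner_maskVec, norm_maskVec_sq] at hf
  rw [hg, hg, sum_add_maskVec, USFun]
  linarith

end BlockStep

theorem weakly_PL_block_descent_rate_general {n : ℕ} (f g : EuclideanSpace ℝ (Fin n) → ℝ)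
    (gi : Fin n → ℝ → ℝ) (L ρ c : ℝ) (hρ : 0 < ρ) (hc : 0 < c)
    (hsmooth : ∀ x h : EuclideanSpace ℝ (Fin n),
      f (x + h) ≤ f x + ⟪gradient f x, h⟫ + L / 2 * ‖h‖ ^ 2)
    (hg : ∀ x : EuclideanSpace ℝ (Fin n), g x = ∑ i, gi i (x i))
    (xstar : EuclideanSpace ℝ (Fin n)) (hmin : ∀ y, f xstar + g xstar ≤ f y + g y)
    (X : ℕ → EuclideanSpace ℝ (Fin n)) (S : ℕ → Finset (Fin n))
    (u : ℕ → EuclideanSpace ℝ (Fin n))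
    (hWPL : ∀ x : EuclideanSpace ℝ (Fin n),
      f x + g x - (f xstar + g xstar) ≤ f (X 0) + g (X 0) - (f xstar + g xstar) →
      ρ * (f x + g x - (f xstar + g xstar)) ^ 2 ≤ lamFun f g L x)
    (hiter : ∀ k : ℕ, X (k + 1) = X k + maskVec (S k) (u k))
    (K : ℕ)
    (hprog : ∀ k < K, c * lamFun f g L (X k) ≤ -USFun f gi L (S k) (X k) (u k)) :
    f (X K) + g (X K) - (f xstar + g xstar) ≤
      (f (X 0) + g (X 0) - (f xstar + g xstar)) /
        (1 + (f (X 0) + g (X 0) - (f xstar + g xstar)) * ρ * c * K) := by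
  have hrate := le_div_one_add_mul_of_le_sub_mul_sq
    (ξ := fun k => f (X k) + g (X k) - (f xstar + g xstar)) (a := ρ * c) (K := K)
    (by positivity) (fun k => sub_nonneg.2 (hmin (X k))) ?_
  · simpa only [mul_assoc] using hrate
  intro k hk hle
  have hdesc := add_maskVec_le_add_USFun (gi := gi) hsmooth hg (S k) (X k) (u k)
  rw [← hiter k] at hdesc
  have hPL := mul_le_mul_of_nonneg_left (hWPL (X k) hle) hc.le
  linarith [hprog k hk]

theorem weakly_PL_block_descent_rate {n : ℕ} (f g : EuclideanSpace ℝ (Fin n) → ℝ)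
    (gi : Fin n → ℝ → ℝ) (L ρ c : ℝ) (hL : 0 < L) (hρ : 0 < ρ) (hc : 0 < c)
    (hdiff : Differentiable ℝ f)
    (hsmooth : ∀ x h : EuclideanSpace ℝ (Fin n),
      f (x + h) ≤ f x + ⟪gradient f x, h⟫ + L / 2 * ‖h‖ ^ 2)
    (hg : ∀ x : EuclideanSpace ℝ (Fin n), g x = ∑ i, gi i (x i))
    (xstar : EuclideanSpace ℝ (Fin n)) (hmin : ∀ y, f xstar + g xstar ≤ f y + g y)
    (X : ℕ → EuclideanSpace ℝ (Fin n)) (S : ℕ → Finset (Fin n))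
    (u : ℕ → EuclideanSpace ℝ (Fin n))
    (hWPL : ∀ x : EuclideanSpace ℝ (Fin n),
      f x + g x - (f xstar + g xstar) ≤ f (X 0) + g (X 0) - (f xstar + g xstar) →
      ρ * (f x + g x - (f xstar + g xstar)) ^ 2 ≤ lamFun f g L x)
    (hSne : ∀ k, (S k).Nonempty)
    (hiter : ∀ k : ℕ, X (k + 1) = X k + maskVec (S k) (u k))
    (K : ℕ)
    (hprog : ∀ k < K, c * lamFun f g L (X k) ≤ -USFun f gi L (S k) (X k) (u k)) :
    f (X K) + g (X K) - (f xstar + g xstar) ≤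
      (f (X 0) + g (X 0) - (f xstar + g xstar)) /
        (1 + (f (X 0) + g (X 0) - (f xstar + g xstar)) * ρ * c * K) :=
  weakly_PL_block_descent_rate_general f g gi L ρ c hρ hc hsmooth hg xstar hmin X S u hWPL hiter K
    hprog
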